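/- arXiv:1902.08389 — 2 statements merged into one kernel-verified Lean document; each statement's English description precedes it below -/
import Mathlib

section
/- Let A be a unital F-algebra with dim A = n > 2, S a generating set, and (m_0, m_1, ..., m_{n−1}) the characteristic sequence of S. For each index h with m_h ≥ 2, there exist indices 0 < t₁ ≤ t₂ < h such that m_h = m_{t₁} + m_{t₂}. -/
/-- Words in a finite subset `S` of a (not necessarily associative) unital algebra:
`IsWord S n a` means `a` is a product (with some bracketing) of `n` elements of `S`,
where `1` is the unique word of length `0`. -/
inductive IsWord {A : Type*} [NonAssocRing A] (S : Set A) : ℕ → A → Prop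
  | one : IsWord S 0 1
  | base : ∀ a, a ∈ S → IsWord S 1 a
  | mul : ∀ {m n : ℕ} {a b : A}, 0 < m → 0 < n → IsWord S m a → IsWord S n b →
      IsWord S (m + n) (a * b)

/-- `Lspan F S k` is the `F`-linear span of all words in `S` of length at most `k`. -/
def Lspan (F : Type*) {A : Type*} [Field F] [NonAssocRing A] [Module F A]
    (S : Set A) (k : ℕ) : Submodule F A :=
  Submodule.span F {a | ∃ m ≤ k, IsWord S m a}

/-- `S` generates the algebra `A` iff the union of all the `Lspan F S k` is all of `A`. -/
def Generates (F : Type*) {A : Type*} [Field F] [NonAssocRing A] [Module F A]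
    (S : Set A) : Prop :=
  (⨆ k, Lspan F S k) = ⊤

/-- The length of a generating set: the least `k` with `Lspan F S k = ⊤`. -/
noncomputable def len (F : Type*) {A : Type*} [Field F] [NonAssocRing A] [Module F A]
    (S : Set A) : ℕ :=
  sInf {k | Lspan F S k = ⊤}

/-- The length of the algebra: the maximum of `len F S` over all finite generating sets. -/
noncomputable def algLen (F : Type*) (A : Type*) [Field F] [NonAssocRing A] [Module F A] : ℕ :=
  sSup {l | ∃ S : Set A, S.Finite ∧ Generates F S ∧ len F S = l}

/-- `w` is a fresh word of length `n` in `S`: a word of length `n` lying in no `Lspan F S m`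
for `m < n`. -/
def Fresh (F : Type*) {A : Type*} [Field F] [NonAssocRing A] [Module F A]
    (S : Set A) (n : ℕ) (w : A) : Prop :=
  IsWord S n w ∧ ∀ m < n, w ∉ Lspan F S m

/-- `(m 0, m 1, …, m N)` is the characteristic sequence of `S`: a non-decreasing sequence
with `m 0 = 0` in which each `k ≥ 1` occurs exactly
`dim Lspan F S k − dim Lspan F S (k-1)` times. -/
def IsCharSeq (F : Type*) {A : Type*} [Field F] [NonAssocRing A] [Module F A]
    (S : Set A) (N : ℕ) (m : ℕ → ℕ) : Prop :=
  m 0 = 0 ∧ (∀ i j, i ≤ j → j ≤ N → m i ≤ m j) ∧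
  (∀ t, 1 ≤ t → t ≤ N → 1 ≤ m t) ∧
  ∀ k, 1 ≤ k →
    ((Finset.range (N + 1)).filter (fun t => m t = k)).card
      = Module.finrank F (Lspan F S k) - Module.finrank F (Lspan F S (k - 1))

section Aux

variable {F A : Type*} [Field F] [NonAssocRing A] [Module F A]

lemma word_mem_Lspan (F : Type*) [Field F] [Module F A] {S : Set A} {p k : ℕ} {a : A}
    (h : IsWord S p a) (hpk : p ≤ k) : a ∈ Lspan F S k :=
  Submodule.subset_span ⟨p, hpk, h⟩

lemma Lspan_mono (F : Type*) [Field F] [Module F A] (S : Set A) {k l : ℕ} (h : k ≤ l) :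
    Lspan F S k ≤ Lspan F S l :=
  Submodule.span_mono (fun _ ⟨p, hp, hw⟩ => ⟨p, hp.trans h, hw⟩)

lemma isWord_zero' {S : Set A} {p : ℕ} {a : A} (h : IsWord S p a) (hp : p = 0) : a = 1 := by
  cases h with
  | one => rfl
  | base a ha => omega
  | mul hm hn _ _ => omega

lemma isWord_zero {S : Set A} {a : A} (h : IsWord S 0 a) : a = 1 :=
  isWord_zero' h rfl

lemma isWord_factor {S : Set A} {k : ℕ} {w : A} (h : IsWord S k w) (hk : 2 ≤ k) :
    ∃ i j a b, 0 < i ∧ 0 < j ∧ IsWord S i a ∧ IsWord S j b ∧ k = i + j ∧ w = a * b := by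
  cases h with
  | one => omega
  | base a ha => omega
  | mul hm hn ha hb => exact ⟨_, _, _, _, hm, hn, ha, hb, rfl, rfl⟩

variable [SMulCommClass F A A] [IsScalarTower F A A]

lemma mul_word_mem {S : Set A} {p q : ℕ} {x b : A} (hx : x ∈ Lspan F S p)
    (hb : IsWord S q b) (hq : 0 < q) : x * b ∈ Lspan F S (p + q) := by
  have key : Lspan F S p ≤ (Lspan F S (p + q)).comap (LinearMap.mulRight F b) := by
    rw [Lspan, Submodule.span_le]
    rintro t ⟨pm, hpm, hw⟩
    simp only [Set.mem_setOf_eq, SetLike.mem_coe, Submodule.mem_comap,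
      LinearMap.mulRight_apply]
    rcases Nat.eq_zero_or_pos pm with h0 | hpos
    · subst h0
      rw [isWord_zero hw, one_mul]
      exact word_mem_Lspan F hb (by omega)
    · exact word_mem_Lspan F (IsWord.mul hpos hq hw hb) (by omega)
  exact key hx

lemma word_mul_mem {S : Set A} {p q : ℕ} {x a : A} (hx : x ∈ Lspan F S q)
    (ha : IsWord S p a) (hp : 0 < p) : a * x ∈ Lspan F S (p + q) := by
  have key : Lspan F S q ≤ (Lspan F S (p + q)).comap (LinearMap.mulLeft F a) := by
    rw [Lspan, Submodule.span_le]
    rintro t ⟨pm, hpm, hw⟩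
    simp only [Set.mem_setOf_eq, SetLike.mem_coe, Submodule.mem_comap,
      LinearMap.mulLeft_apply]
    rcases Nat.eq_zero_or_pos pm with h0 | hpos
    · subst h0
      rw [isWord_zero hw, mul_one]
      exact word_mem_Lspan F ha (by omega)
    · exact word_mem_Lspan F (IsWord.mul hp hpos ha hw) (by omega)
  exact key hx

end Aux

theorem stmt_9 (F : Type*) (A : Type*) [Field F] [NonAssocRing A] [Module F A]
    [SMulCommClass F A A] [IsScalarTower F A A] [FiniteDimensional F A]
    (S : Set A) (hS : S.Finite) (hgen : Generates F S) (n : ℕ)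
    (hdim : Module.finrank F A = n) (hn : 2 < n)
    (m : ℕ → ℕ) (hm : IsCharSeq F S (n - 1) m) :
    ∀ h, h ≤ n - 1 → 2 ≤ m h →
      ∃ t₁ t₂, 0 < t₁ ∧ t₁ ≤ t₂ ∧ t₂ < h ∧ m h = m t₁ + m t₂ := by
  obtain ⟨hm0, hmono, hpos1, hcount⟩ := hm
  intro h hhN hmh2
  set N := n - 1 with hN
  set k := m h with hk
  -- Step 1: the count of indices with value k is positive, so L_{k-1} < L_k
  have hcardk : 1 ≤ ((Finset.range (N + 1)).filter (fun t => m t = k)).card := by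
    apply Finset.card_pos.2
    exact ⟨h, Finset.mem_filter.2 ⟨Finset.mem_range.2 (by omega), rfl⟩⟩
  have hrk : Module.finrank F (Lspan F S (k - 1)) < Module.finrank F (Lspan F S k) := by
    have := hcount k (by omega)
    omega
  -- Step 2: there is a word of length k not in L_{k-1}
  have hnle : ¬ (Lspan F S k ≤ Lspan F S (k - 1)) := by
    intro hle
    have heq : Lspan F S k = Lspan F S (k - 1) :=
      le_antisymm hle (Lspan_mono F S (by omega))
    rw [heq] at hrk
    omega
  rw [Lspan, Submodule.span_le, Set.not_subset] at hnle
  obtain ⟨w, ⟨p, hpk, hw⟩, hwnot⟩ := hnle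
  have hpk' : p = k := by
    by_contra hne
    exact hwnot (word_mem_Lspan F hw (by omega))
  subst hpk'
  -- Step 3: factor w = a * b
  obtain ⟨i, j, a, b, hi, hj, ha, hb, hkij, hwab⟩ := isWord_factor hw hmh2
  subst hwab
  -- Step 4: a ∉ L_{i-1}, b ∉ L_{j-1}
  have hanot : a ∉ Lspan F S (i - 1) := by
    intro hmem
    have hmm : a * b ∈ Lspan F S (i - 1 + j) := mul_word_mem hmem hb hj
    have heq : i - 1 + j = k - 1 := by omega
    rw [heq] at hmm
    exact hwnot hmm
  have hbnot : b ∉ Lspan F S (j - 1) := by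
    intro hmem
    have hmm : a * b ∈ Lspan F S (i + (j - 1)) := word_mul_mem hmem ha hi
    have heq : i + (j - 1) = k - 1 := by omega
    rw [heq] at hmm
    exact hwnot hmm
  -- Step 5: counts for values i and j are positive
  have hstrict : ∀ q : ℕ, 0 < q → (∃ c, IsWord S q c ∧ c ∉ Lspan F S (q - 1)) →
      1 ≤ ((Finset.range (N + 1)).filter (fun t => m t = q)).card := by
    intro q hq ⟨c, hc, hcnot⟩
    have hlt : Lspan F S (q - 1) < Lspan F S q :=
      lt_of_le_of_ne (Lspan_mono F S (by omega))
        (fun heq => hcnot (heq ▸ word_mem_Lspan F hc le_rfl))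
    have := Submodule.finrank_lt_finrank_of_lt hlt
    have := hcount q (by omega)
    omega
  have hci := hstrict i hi ⟨a, ha, hanot⟩
  have hcj := hstrict j hj ⟨b, hb, hbnot⟩
  obtain ⟨t₁, ht₁⟩ := Finset.card_pos.1 (by omega : 0 < ((Finset.range (N + 1)).filter
    (fun t => m t = i)).card)
  obtain ⟨t₂, ht₂⟩ := Finset.card_pos.1 (by omega : 0 < ((Finset.range (N + 1)).filter
    (fun t => m t = j)).card)
  rw [Finset.mem_filter, Finset.mem_range] at ht₁ ht₂
  obtain ⟨ht₁N, ht₁v⟩ := ht₁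
  obtain ⟨ht₂N, ht₂v⟩ := ht₂
  -- Step 6: positivity and boundedness of the indices
  have hprop : ∀ t : ℕ, t < N + 1 → 1 ≤ m t → m t < k → 0 < t ∧ t < h := by
    intro t htN htv htk
    constructor
    · rcases Nat.eq_zero_or_pos t with h0 | h0
      · rw [h0, hm0] at htv; omega
      · exact h0
    · by_contra hle
      push_neg at hle
      have := hmono h t hle (by omega)
      omega
  have h₁ := hprop t₁ ht₁N (by omega) (by omega)
  have h₂ := hprop t₂ ht₂N (by omega) (by omega)
  -- Step 7: order the two indices
  rcases le_total t₁ t₂ with hle | hle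
  · exact ⟨t₁, t₂, h₁.1, hle, h₂.2, by omega⟩
  · exact ⟨t₂, t₁, h₂.1, hle, h₁.2, by omega⟩
end

section
/- For every n > 2, the n-dimensional real algebra A with basis 1 = e_0, e_1, ..., e_{n−1}, and multiplication e_k e_{k+1} = e_{k+2}, e_{k+1} e_k = −e_{k+2} for 1 ≤ k ≤ n−3, e_m² = −1 for 1 ≤ m ≤ n−1, and e_p e_q = 0 for all other pairs, is a locally-complex algebra with l(A) = F_{n−1}, the (n−1)-th Fibonacci number. -/
/-- A locally-complex algebra: a finite-dimensional unital real (not necessarily associative)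
algebra that is quadratic (every `a` satisfies `a² = u•1 + v•a`) and has no nontrivial
idempotents and no nonzero square-zero elements. -/
def LocallyComplex (A : Type*) [NonAssocRing A] [Module ℝ A] [SMulCommClass ℝ A A]
    [IsScalarTower ℝ A A] : Prop :=
  FiniteDimensional ℝ A ∧
  (∀ a : A, ∃ u v : ℝ, a * a = u • (1 : A) + v • a) ∧
  (∀ a : A, a * a = a → a = 0 ∨ a = 1) ∧
  (∀ a : A, a * a = 0 → a = 0)

/-- A bundled (not necessarily associative) unital `F`-algebra. -/
structure AlgWitness (F : Type*) [Field F] where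
  carrier : Type
  [ring : NonAssocRing carrier]
  [mod : Module F carrier]
  [scc : SMulCommClass F carrier carrier]
  [ist : IsScalarTower F carrier carrier]

attribute [instance] AlgWitness.ring AlgWitness.mod AlgWitness.scc AlgWitness.ist

/-!
Write `a = a₀ + ∑ aᵢ eᵢ`. The `e₁`- and `e₂`-coordinates of a product are `a₀ b_m + b₀ a_m`, so the
projection of every word to the plane `⟨e₁, e₂⟩` lies in the span of the projections of the
generators, and a generating set must project onto that plane. Removing constant terms, `L₁`
then contains elements led by `e₁` and by `e₂`, and the product of elements led by `e_m` and
`e_{m+1}` is led by `e_{m+2}`; hence `L_{F_m}` contains an element led by `e_m`, and the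
resulting triangular family spans `A` inside `L_{F_{n-1}}`. Conversely, giving `e_m` the weight
`F_m` makes weights add under multiplication (`e_m e_{m+1} = e_{m+2}`, `F_m + F_{m+1} = F_{m+2}`),
so words of length `k < F_{n-1}` in `{e₁, e₂}` cannot reach `e_{n-1}`. Finally every element
satisfies `a² = 2a₀ a - |a|²`, which makes `A` locally complex.
-/

section Words

variable {F A : Type*} [Field F] [NonAssocRing A] [Module F A] {S : Set A}

lemma IsWord.eq_one {a : A} (hw : IsWord S 0 a) : a = 1 := by
  generalize hk : 0 = k at hw
  induction hw with
  | one => rfl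
  | base => omega
  | mul hm => omega

lemma lspan_mono : Monotone (Lspan F S) := fun _ _ hkl =>
  Submodule.span_mono fun _ ⟨m, hm, hw⟩ => ⟨m, hm.trans hkl, hw⟩

lemma one_mem_lspan (k : ℕ) : (1 : A) ∈ Lspan F S k :=
  Submodule.subset_span ⟨0, k.zero_le, .one⟩

lemma span_le_lspan_one : Submodule.span F S ≤ Lspan F S 1 :=
  Submodule.span_mono fun a ha => ⟨1, le_rfl, .base a ha⟩

lemma generates_of_lspan_eq_top {k : ℕ} (h : Lspan F S k = ⊤) : Generates F S :=
  eq_top_iff.2 (h ▸ le_iSup (Lspan F S) k)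

lemma len_le_of_lspan_eq_top {k : ℕ} (h : Lspan F S k = ⊤) : len F S ≤ k :=
  Nat.sInf_le h

lemma len_eq_of_lspan {k : ℕ} (h : Lspan F S k = ⊤) (hlt : ∀ j < k, Lspan F S j ≠ ⊤) :
    len F S = k :=
  (len_le_of_lspan_eq_top h).antisymm <|
    le_csInf ⟨k, h⟩ fun j hj => not_lt.1 fun hjk => hlt j hjk hj

lemma algLen_eq_of_forall_len_le {N : ℕ}
    (hle : ∀ S : Set A, S.Finite → Generates F S → len F S ≤ N)
    {S₀ : Set A} (hfin : S₀.Finite) (hgen : Generates F S₀) (hlen : len F S₀ = N) :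
    algLen F A = N := by
  have hN : N ∈ {l | ∃ S : Set A, S.Finite ∧ Generates F S ∧ len F S = l} :=
    ⟨S₀, hfin, hgen, hlen⟩
  have hbdd : ∀ l ∈ {l | ∃ S : Set A, S.Finite ∧ Generates F S ∧ len F S = l}, l ≤ N := by
    rintro _ ⟨S, hS, hg, rfl⟩
    exact hle S hS hg
  exact (csSup_le ⟨N, hN⟩ hbdd).antisymm (le_csSup ⟨N, hbdd⟩ hN)

lemma IsWord.mem_of_filtration {W : ℕ → Submodule F A} (h1 : (1 : A) ∈ W 0)
    (hS : ∀ a ∈ S, a ∈ W 1) (hmul : ∀ p q x y, x ∈ W p → y ∈ W q → x * y ∈ W (p + q))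
    {m : ℕ} {a : A} (hw : IsWord S m a) : a ∈ W m := by
  induction hw with
  | one => exact h1
  | base a ha => exact hS a ha
  | mul _ _ _ _ iha ihb => exact hmul _ _ _ _ iha ihb

lemma lspan_le_of_filtration {W : ℕ → Submodule F A} (hW : Monotone W) (h1 : (1 : A) ∈ W 0)
    (hS : ∀ a ∈ S, a ∈ W 1) (hmul : ∀ p q x y, x ∈ W p → y ∈ W q → x * y ∈ W (p + q))
    (k : ℕ) : Lspan F S k ≤ W k :=
  Submodule.span_le.2 fun _ ⟨_, hm, hw⟩ => hW hm (hw.mem_of_filtration h1 hS hmul)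

variable [SMulCommClass F A A] [IsScalarTower F A A]

lemma mul_mem_of_mem_span {s t : Set A} {P : Submodule F A} (h : ∀ a ∈ s, ∀ b ∈ t, a * b ∈ P)
    {x y : A} (hx : x ∈ Submodule.span F s) (hy : y ∈ Submodule.span F t) : x * y ∈ P := by
  have : Submodule.map₂ (LinearMap.mul F A) (Submodule.span F s) (Submodule.span F t) ≤ P := by
    rw [Submodule.map₂_span_span, Submodule.span_le]
    rintro _ ⟨a, ha, b, hb, rfl⟩
    exact h a ha b hb
  exact Submodule.map₂_le.1 this x hx y hy

lemma mul_mem_lspan {p q : ℕ} {x y : A} (hx : x ∈ Lspan F S p) (hy : y ∈ Lspan F S q) :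
    x * y ∈ Lspan F S (p + q) := by
  refine mul_mem_of_mem_span ?_ hx hy
  rintro a ⟨k, hk, ha⟩ b ⟨l, hl, hb⟩
  rcases Nat.eq_zero_or_pos k with rfl | hk0
  · rw [ha.eq_one, one_mul]
    exact lspan_mono (by omega) (Submodule.subset_span ⟨l, hl, hb⟩)
  rcases Nat.eq_zero_or_pos l with rfl | hl0
  · rw [hb.eq_one, mul_one]
    exact lspan_mono (by omega) (Submodule.subset_span ⟨k, hk, ha⟩)
  exact Submodule.subset_span ⟨k + l, by omega, .mul hk0 hl0 ha hb⟩

end Words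

def FibAlg (n : ℕ) : Type := Fin n → ℝ

namespace FibAlg

variable {n : ℕ}

instance : AddCommGroup (FibAlg n) := inferInstanceAs (AddCommGroup (Fin n → ℝ))

instance : Module ℝ (FibAlg n) := inferInstanceAs (Module ℝ (Fin n → ℝ))

instance : FiniteDimensional ℝ (FibAlg n) := inferInstanceAs (FiniteDimensional ℝ (Fin n → ℝ))

noncomputable def basis : Module.Basis (Fin n) ℝ (FibAlg n) := Pi.basisFun ℝ (Fin n)

-- Indexed by `ℕ` to match `e : ℕ → _`; `coord m = 0` for `m ≥ n`.
noncomputable def coord (m : ℕ) : FibAlg n →ₗ[ℝ] ℝ :=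
  if h : m < n then basis.coord ⟨m, h⟩ else 0

lemma coord_of_lt {m : ℕ} (h : m < n) (a : FibAlg n) : coord m a = basis.repr a ⟨m, h⟩ := by
  simp [coord, h]

lemma coord_of_le {m : ℕ} (h : n ≤ m) (a : FibAlg n) : coord m a = 0 := by
  simp [coord, not_lt.2 h]

lemma ext_coord {a b : FibAlg n} (h : ∀ m < n, coord m a = coord m b) : a = b :=
  basis.ext_elem fun i => by simpa [coord_of_lt i.isLt] using h i i.isLt

noncomputable def ev (m : ℕ) : FibAlg n := if h : m < n then basis ⟨m, h⟩ else 0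

lemma ev_of_le {m : ℕ} (h : n ≤ m) : (ev m : FibAlg n) = 0 := dif_neg (not_lt.2 h)

lemma ev_val (i : Fin n) : (ev i.val : FibAlg n) = basis i := dif_pos i.isLt

lemma coord_ev (j m : ℕ) : coord j (ev m : FibAlg n) = if j = m ∧ m < n then 1 else 0 := by
  by_cases hm : m < n
  · by_cases hj : j < n
    · simp [ev, coord_of_lt hj, hm, Finsupp.single_apply, Fin.ext_iff, eq_comm]
    · rw [coord_of_le (not_lt.1 hj), if_neg (by omega)]
  · simp [ev, hm]

-- `(ab)_m` for `a = ∑ aᵢ eᵢ`, `e₀ = 1`: `a₀b_m + b₀a_m + a_{m-2}b_{m-1} - a_{m-1}b_{m-2}` (the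
-- last two terms only for `m ≥ 3`), and `(ab)₀ = a₀b₀ - ∑_{i ≥ 1} aᵢbᵢ`.
noncomputable def mulCoord (a b : FibAlg n) (m : ℕ) : ℝ :=
  coord 0 a * coord m b + coord 0 b * coord m a
    - (if m = 0 then ∑ j ∈ Finset.range n, coord j a * coord j b else 0)
    + if 3 ≤ m then coord (m - 2) a * coord (m - 1) b - coord (m - 1) a * coord (m - 2) b else 0

noncomputable instance : Mul (FibAlg n) where
  mul a b := basis.equivFun.symm fun i => mulCoord a b i

noncomputable instance : One (FibAlg n) := ⟨ev 0⟩

lemma one_def : (1 : FibAlg n) = ev 0 := rfl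

lemma coord_mul {m : ℕ} (hm : m < n) (a b : FibAlg n) : coord m (a * b) = mulCoord a b m := by
  rw [coord_of_lt hm, ← basis.equivFun_apply]
  exact congrFun (basis.equivFun.apply_symm_apply _) _

lemma coord_ev_of_lt {j : ℕ} (hj : j < n) (m : ℕ) :
    coord j (ev m : FibAlg n) = if j = m then 1 else 0 := by
  rw [coord_ev]; split_ifs <;> grind

lemma dot_ev_left {p : ℕ} (hp : p < n) (b : FibAlg n) :
    ∑ j ∈ Finset.range n, coord j (ev p : FibAlg n) * coord j b = coord p b := by
  rw [Finset.sum_congr rfl fun j hj => by rw [coord_ev_of_lt (Finset.mem_range.1 hj)]]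
  simp [hp]

lemma dot_ev_right {p : ℕ} (hp : p < n) (a : FibAlg n) :
    ∑ j ∈ Finset.range n, coord j a * coord j (ev p : FibAlg n) = coord p a := by
  simp_rw [mul_comm (coord _ a)]; exact dot_ev_left hp a

noncomputable instance : NonAssocRing (FibAlg n) where
  left_distrib a b c := ext_coord fun m hm => by
    simp only [coord_mul hm, mulCoord, map_add, Finset.sum_add_distrib, mul_add]
    split_ifs <;> ring
  right_distrib a b c := ext_coord fun m hm => by
    simp only [coord_mul hm, mulCoord, map_add, Finset.sum_add_distrib, add_mul]
    split_ifs <;> ring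
  zero_mul a := ext_coord fun m hm => by simp [coord_mul hm, mulCoord]
  mul_zero a := ext_coord fun m hm => by simp [coord_mul hm, mulCoord]
  one_mul a := ext_coord fun m hm => by
    have h0 : 0 < n := m.zero_le.trans_lt hm
    rw [coord_mul hm, mulCoord, one_def, dot_ev_left h0]
    simp only [coord_ev, h0, and_true]
    split_ifs <;> first | omega | subst_vars; ring
  mul_one a := ext_coord fun m hm => by
    have h0 : 0 < n := m.zero_le.trans_lt hm
    rw [coord_mul hm, mulCoord, one_def, dot_ev_right h0]
    simp only [coord_ev, h0, and_true]
    split_ifs <;> first | omega | subst_vars; ring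

instance : SMulCommClass ℝ (FibAlg n) (FibAlg n) where
  smul_comm r a b := ext_coord fun m hm => by
    simp only [coord_mul hm, mulCoord, map_smul, smul_eq_mul, mul_left_comm (coord _ a) r,
      ← Finset.mul_sum]
    split_ifs <;> ring

instance : IsScalarTower ℝ (FibAlg n) (FibAlg n) where
  smul_assoc r a b := ext_coord fun m hm => by
    simp only [coord_mul hm, mulCoord, map_smul, smul_eq_mul, mul_assoc, ← Finset.mul_sum]
    split_ifs <;> ring

lemma ev_mul_ev {p q : ℕ} (hp : 1 ≤ p) (hq : 1 ≤ q) (hpn : p < n) (hqn : q < n) :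
    (ev p : FibAlg n) * ev q =
      if p = q then -1 else if q = p + 1 then ev (p + 2) else if p = q + 1 then -ev (q + 2)
      else 0 := by
  have hcoord0 : ∀ {r : ℕ}, 1 ≤ r → coord 0 (ev r : FibAlg n) = 0 := fun hr => by
    rw [coord_ev, if_neg (by omega)]
  split_ifs <;> refine ext_coord fun m hm => ?_ <;>
    rw [coord_mul hm, mulCoord, dot_ev_left hpn, hcoord0 hp, hcoord0 hq] <;>
    simp only [map_neg, map_zero, one_def, coord_ev, hpn, hqn, and_true] <;>
    split_ifs <;> first | omega | norm_num

noncomputable def normSq (a : FibAlg n) : ℝ := ∑ j ∈ Finset.range n, coord j a ^ 2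

lemma eq_zero_of_normSq_eq_zero {a : FibAlg n} (h : normSq a = 0) : a = 0 := by
  refine ext_coord fun m hm => ?_
  have := (Finset.sum_eq_zero_iff_of_nonneg fun j _ => sq_nonneg (coord j a)).1 h m
    (Finset.mem_range.2 hm)
  simpa using this

lemma mul_self_eq (a : FibAlg n) : a * a = (2 * coord 0 a) • a - normSq a • 1 := by
  refine ext_coord fun m hm => ?_
  rw [coord_mul hm, mulCoord, one_def]
  simp only [map_sub, map_smul, smul_eq_mul, coord_ev, m.zero_le.trans_lt hm, and_true, normSq]
  split_ifs <;> first | omega | subst_vars; simp only [sq]; ring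

lemma eq_smul_one_of_mul_self_eq_smul {a : FibAlg n} {c : ℝ} (h : a * a = c • a) :
    ∃ s : ℝ, a = s • 1 := by
  have hlin : (2 * coord 0 a - c) • a = normSq a • 1 := by
    rw [sub_smul, ← h, mul_self_eq]; abel
  by_cases hc : 2 * coord 0 a - c = 0
  · refine ⟨0, ?_⟩
    rw [hc, zero_smul, eq_comm, smul_eq_zero] at hlin
    rcases hlin with hN | h10
    · rw [eq_zero_of_normSq_eq_zero hN, zero_smul]
    · have := subsingleton_of_zero_eq_one h10.symm
      exact Subsingleton.elim _ _
  · exact ⟨(2 * coord 0 a - c)⁻¹ * normSq a, by rw [mul_smul, ← hlin, inv_smul_smul₀ hc]⟩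

theorem locallyComplex : LocallyComplex (FibAlg n) := by
  refine ⟨inferInstance, fun a => ⟨-normSq a, 2 * coord 0 a, ?_⟩, fun a h => ?_, fun a h => ?_⟩
  · rw [mul_self_eq, neg_smul]; abel
  · obtain ⟨s, rfl⟩ := eq_smul_one_of_mul_self_eq_smul (c := 1) (by rw [h, one_smul])
    rw [smul_mul_smul_comm, one_mul, ← sub_eq_zero, ← sub_smul, smul_eq_zero] at h
    rcases h with hs | h10
    · rcases (by grind : s = 0 ∨ s = 1) with rfl | rfl <;> simp
    · simp [h10]
  · obtain ⟨s, rfl⟩ := eq_smul_one_of_mul_self_eq_smul (c := 0) (by rw [h, zero_smul])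
    rw [smul_mul_smul_comm, one_mul, smul_eq_zero] at h
    rcases h with hs | h10
    · rw [mul_self_eq_zero.1 hs, zero_smul]
    · rw [h10, smul_zero]

lemma coord_sub_coord_zero_smul_one (w : FibAlg n) (j : ℕ) :
    coord j (w - coord 0 w • 1) = if j = 0 then 0 else coord j w := by
  rcases Nat.eq_zero_or_pos n with rfl | hn
  · simp [coord_of_le]
  · split_ifs with hj <;> simp [one_def, coord_ev, hj, hn]

noncomputable def proj12 : FibAlg n →ₗ[ℝ] ℝ × ℝ := (coord 1).prod (coord 2)

lemma proj12_apply (a : FibAlg n) : proj12 a = (coord 1 a, coord 2 a) := rfl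

lemma coord_mul_of_lt_three {m : ℕ} (hm0 : m ≠ 0) (hm3 : m < 3) (hmn : m < n) (a b : FibAlg n) :
    coord m (a * b) = coord 0 a * coord m b + coord 0 b * coord m a := by
  rw [coord_mul hmn, mulCoord, if_neg hm0, if_neg (by omega)]
  ring

lemma proj12_mul (hn : 2 < n) (a b : FibAlg n) :
    proj12 (a * b) = coord 0 a • proj12 b + coord 0 b • proj12 a := by
  ext <;> simp [proj12, coord_mul_of_lt_three, hn, (by omega : 1 < n)]

lemma proj12_one : proj12 (1 : FibAlg n) = 0 := by
  simp [proj12, one_def, coord_ev]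

lemma proj12_smul_ev_add_smul_ev (hn : 2 < n) (x y : ℝ) :
    proj12 (x • ev 1 + y • ev 2 : FibAlg n) = (x, y) := by
  simp [proj12, coord_ev, (by omega : 1 < n), hn]

lemma map_proj12_span_eq_top_of_generates (hn : 2 < n) {S : Set (FibAlg n)}
    (hS : Generates ℝ S) : (Submodule.span ℝ S).map proj12 = ⊤ := by
  set P := ((Submodule.span ℝ S).map proj12).comap proj12
  have hLP : ∀ k, Lspan ℝ S k ≤ P := by
    refine lspan_le_of_filtration (W := fun _ => P) monotone_const ?_ ?_ ?_
    · simp [P, proj12_one]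
    · exact fun a ha => Submodule.mem_map_of_mem (Submodule.subset_span ha)
    · intro _ _ x y hx hy
      simp only [P, Submodule.mem_comap, proj12_mul hn] at hx hy ⊢
      exact add_mem (Submodule.smul_mem _ _ hy) (Submodule.smul_mem _ _ hx)
  have hP : ⊤ ≤ P := hS ▸ iSup_le hLP
  refine eq_top_iff.2 fun ⟨x, y⟩ _ => ?_
  rw [← proj12_smul_ev_add_smul_ev hn]
  exact hP Submodule.mem_top

def IsLeadingAt (v : FibAlg n) (m : ℕ) : Prop :=
  (∀ j < m, coord j v = 0) ∧ coord m v = 1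

lemma isLeadingAt_sub_coord_zero_smul_one {w : FibAlg n} {m : ℕ} (hm : 1 ≤ m)
    (hlow : ∀ j, 1 ≤ j → j < m → coord j w = 0) (hm1 : coord m w = 1) :
    IsLeadingAt (w - coord 0 w • 1) m := by
  refine ⟨fun j hj => ?_, by rwa [coord_sub_coord_zero_smul_one, if_neg (by omega)]⟩
  rw [coord_sub_coord_zero_smul_one]
  split_ifs with hj0
  · rfl
  · exact hlow j (by omega) hj

lemma exists_isLeadingAt_mem_span_of_le_two (hn : 2 < n) {S : Set (FibAlg n)}
    (hS : (Submodule.span ℝ S).map proj12 = ⊤) {m : ℕ} (hm1 : 1 ≤ m) (hm2 : m ≤ 2) :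
    ∃ v ∈ Lspan ℝ S 1, IsLeadingAt v m := by
  obtain ⟨w, hw, hpw⟩ : proj12 (ev m : FibAlg n) ∈ (Submodule.span ℝ S).map proj12 := by
    rw [hS]; trivial
  rw [proj12_apply, proj12_apply, Prod.mk.injEq] at hpw
  refine ⟨w - coord 0 w • 1,
    sub_mem (span_le_lspan_one hw) (Submodule.smul_mem _ _ (one_mem_lspan 1)),
    isLeadingAt_sub_coord_zero_smul_one hm1 (fun j hj1 hjm => ?_) ?_⟩
  · rw [show j = 1 by omega, hpw.1, coord_ev, if_neg (by omega)]
  · rcases (show m = 1 ∨ m = 2 by omega) with rfl | rfl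
    · rw [hpw.1, coord_ev, if_pos ⟨rfl, by omega⟩]
    · rw [hpw.2, coord_ev, if_pos ⟨rfl, hn⟩]

lemma IsLeadingAt.mul {a b : FibAlg n} {m : ℕ} (hm : 1 ≤ m) (hmn : m + 2 < n)
    (ha : IsLeadingAt a m) (hb : IsLeadingAt b (m + 1)) :
    IsLeadingAt (a * b - coord 0 (a * b) • 1) (m + 2) := by
  have ha0 := ha.1 0 (by omega)
  have hb0 := hb.1 0 (by omega)
  refine isLeadingAt_sub_coord_zero_smul_one (by omega) (fun j hj1 hjm => ?_) ?_
  · rw [coord_mul (by omega), mulCoord, ha0, hb0, if_neg (by omega)]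
    split_ifs
    · rw [hb.1 (j - 1) (by omega), hb.1 (j - 2) (by omega)]; ring
    · ring
  · rw [coord_mul hmn, mulCoord, ha0, hb0, if_neg (by omega), if_pos (by omega),
      show m + 2 - 2 = m by omega, show m + 2 - 1 = m + 1 by omega, ha.2, hb.2, hb.1 m (by omega)]
    ring

lemma exists_isLeadingAt_mem_lspan (hn : 2 < n) {S : Set (FibAlg n)}
    (hS : (Submodule.span ℝ S).map proj12 = ⊤) (m : ℕ) (hm : 1 ≤ m) (hmn : m < n) :
    ∃ v ∈ Lspan ℝ S (Nat.fib m), IsLeadingAt v m := by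
  induction m using Nat.strong_induction_on with
  | _ m ih =>
    match m, hm with
    | 1, _ => exact exists_isLeadingAt_mem_span_of_le_two hn hS le_rfl (by omega)
    | 2, _ => exact exists_isLeadingAt_mem_span_of_le_two hn hS (by omega) le_rfl
    | k + 3, _ =>
      obtain ⟨a, haL, ha⟩ := ih (k + 1) (by omega) (by omega) (by omega)
      obtain ⟨b, hbL, hb⟩ := ih (k + 2) (by omega) (by omega) (by omega)
      refine ⟨a * b - coord 0 (a * b) • 1, ?_, ha.mul (by omega) hmn hb⟩
      rw [Nat.fib_add_two]
      exact sub_mem (mul_mem_lspan haL hbL) (Submodule.smul_mem _ _ (one_mem_lspan _))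

lemma span_range_eq_top_of_isLeadingAt {u : Fin n → FibAlg n} (hu : ∀ i, IsLeadingAt (u i) i) :
    Submodule.span ℝ (Set.range u) = ⊤ := by
  refine (basis.is_basis_iff_det.2 ?_).2
  have hM : ∀ i j, basis.toMatrix u i j = coord i (u j) := fun i j => by
    rw [Module.Basis.toMatrix_apply, coord_of_lt i.isLt]
  rw [Module.Basis.det_apply, Matrix.det_of_isLowerTriangular _ fun i j hij => ?_]
  · simp [hM, (hu _).2]
  · rw [hM, (hu j).1 i hij]

lemma lspan_fib_eq_top (hn : 2 < n) {S : Set (FibAlg n)}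
    (hS : (Submodule.span ℝ S).map proj12 = ⊤) : Lspan ℝ S (Nat.fib (n - 1)) = ⊤ := by
  have hu : ∀ i : Fin n, ∃ v ∈ Lspan ℝ S (Nat.fib (n - 1)), IsLeadingAt v i := by
    intro i
    rcases Nat.eq_zero_or_pos i.val with hi | hi
    · refine ⟨1, one_mem_lspan _, fun j hj => by omega, ?_⟩
      simp [hi, one_def, coord_ev, i.pos]
    · obtain ⟨v, hv, hlead⟩ := exists_isLeadingAt_mem_lspan hn hS i hi i.isLt
      exact ⟨v, lspan_mono (Nat.fib_mono (by omega)) hv, hlead⟩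
  choose u huL hlead using hu
  rw [eq_top_iff, ← span_range_eq_top_of_isLeadingAt hlead, Submodule.span_le]
  rintro _ ⟨i, rfl⟩
  exact huL i

noncomputable def fibFiltration (k : ℕ) : Submodule ℝ (FibAlg n) :=
  Submodule.span ℝ (ev '' {m | Nat.fib m ≤ k})

lemma ev_mem_fibFiltration {m k : ℕ} (h : Nat.fib m ≤ k) : (ev m : FibAlg n) ∈ fibFiltration k :=
  Submodule.subset_span ⟨m, h, rfl⟩

lemma fibFiltration_mono : Monotone (fibFiltration : ℕ → Submodule ℝ (FibAlg n)) :=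
  fun _ _ hkl => Submodule.span_mono (Set.image_mono fun _ hm => le_trans hm hkl)

lemma ev_mul_ev_mem_fibFiltration {p q k l : ℕ} (hp : Nat.fib p ≤ k) (hq : Nat.fib q ≤ l) :
    (ev p : FibAlg n) * ev q ∈ fibFiltration (k + l) := by
  rcases Nat.eq_zero_or_pos p with rfl | hp1
  · rw [← one_def, one_mul]; exact ev_mem_fibFiltration (by omega)
  rcases Nat.eq_zero_or_pos q with rfl | hq1
  · rw [← one_def, mul_one]; exact ev_mem_fibFiltration (by omega)
  obtain hpn | hpn := le_or_gt n p
  · rw [ev_of_le hpn, zero_mul]; exact zero_mem _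
  obtain hqn | hqn := le_or_gt n q
  · rw [ev_of_le hqn, mul_zero]; exact zero_mem _
  rw [ev_mul_ev hp1 hq1 hpn hqn]
  split_ifs with h1 h2 h3
  · exact neg_mem (ev_mem_fibFiltration (by simp))
  · subst h2; exact ev_mem_fibFiltration (by rw [Nat.fib_add_two]; omega)
  · subst h3; exact neg_mem (ev_mem_fibFiltration (by rw [Nat.fib_add_two]; omega))
  · exact zero_mem _

lemma lspan_le_fibFiltration (k : ℕ) :
    Lspan ℝ ({ev 1, ev 2} : Set (FibAlg n)) k ≤ fibFiltration k := by
  refine lspan_le_of_filtration fibFiltration_mono (ev_mem_fibFiltration le_rfl) ?_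
    (fun p q x y hx hy => ?_) k
  · rintro _ (rfl | rfl) <;> exact ev_mem_fibFiltration (by simp)
  · refine mul_mem_of_mem_span ?_ hx hy
    rintro _ ⟨p, hp, rfl⟩ _ ⟨q, hq, rfl⟩
    exact ev_mul_ev_mem_fibFiltration hp hq

lemma ev_notMem_fibFiltration {m k : ℕ} (hm : m < n) (hk : k < Nat.fib m) :
    (ev m : FibAlg n) ∉ fibFiltration k := by
  have hker : fibFiltration k ≤ LinearMap.ker (coord m : FibAlg n →ₗ[ℝ] ℝ) := by
    refine Submodule.span_le.2 ?_
    rintro _ ⟨j, hj : Nat.fib j ≤ k, rfl⟩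
    rw [SetLike.mem_coe, LinearMap.mem_ker, coord_ev, if_neg]
    rintro ⟨rfl, -⟩
    omega
  intro hmem
  have := hker hmem
  rw [LinearMap.mem_ker, coord_ev, if_pos ⟨rfl, hm⟩] at this
  exact one_ne_zero this

lemma map_proj12_span_ev_one_two (hn : 2 < n) :
    (Submodule.span ℝ ({ev 1, ev 2} : Set (FibAlg n))).map proj12 = ⊤ := by
  refine eq_top_iff.2 fun ⟨x, y⟩ _ => ?_
  rw [← proj12_smul_ev_add_smul_ev hn]
  refine Submodule.mem_map_of_mem (add_mem (Submodule.smul_mem _ _ ?_) (Submodule.smul_mem _ _ ?_))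
  all_goals exact Submodule.subset_span (by simp)

lemma len_ev_one_two (hn : 2 < n) :
    len ℝ ({ev 1, ev 2} : Set (FibAlg n)) = Nat.fib (n - 1) := by
  refine len_eq_of_lspan (lspan_fib_eq_top hn (map_proj12_span_ev_one_two hn)) fun k hk htop => ?_
  have hmem : (ev (n - 1) : FibAlg n) ∈ Lspan ℝ {ev 1, ev 2} k := by rw [htop]; trivial
  exact ev_notMem_fibFiltration (by omega) hk (lspan_le_fibFiltration k hmem)

theorem algLen_eq (hn : 2 < n) : algLen ℝ (FibAlg n) = Nat.fib (n - 1) :=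
  algLen_eq_of_forall_len_le
    (fun _ _ hS => len_le_of_lspan_eq_top
      (lspan_fib_eq_top hn (map_proj12_span_eq_top_of_generates hn hS)))
    (Set.toFinite _)
    (generates_of_lspan_eq_top (lspan_fib_eq_top hn (map_proj12_span_ev_one_two hn)))
    (len_ev_one_two hn)

end FibAlg

theorem stmt_19 (n : ℕ) (hn : 2 < n) :
    ∃ (Wit : AlgWitness ℝ) (e : ℕ → Wit.carrier),
      Module.finrank ℝ Wit.carrier = n ∧
      e 0 = 1 ∧
      LinearIndependent ℝ (fun i : Fin n => e i.val) ∧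
      Submodule.span ℝ (Set.range (fun i : Fin n => e i.val)) = ⊤ ∧
      (∀ k, 1 ≤ k → k ≤ n - 3 →
        e k * e (k + 1) = e (k + 2) ∧ e (k + 1) * e k = -(e (k + 2))) ∧
      (∀ i, 1 ≤ i → i ≤ n - 1 → e i * e i = -1) ∧
      (∀ p q, 1 ≤ p → p ≤ n - 1 → 1 ≤ q → q ≤ n - 1 → p ≠ q →
        ¬(q = p + 1 ∧ p ≤ n - 3) → ¬(p = q + 1 ∧ q ≤ n - 3) → e p * e q = 0) ∧
      LocallyComplex Wit.carrier ∧
      algLen ℝ Wit.carrier = Nat.fib (n - 1) := by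
  have hbasis : (fun i : Fin n => (FibAlg.ev i.val : FibAlg n)) = FibAlg.basis :=
    funext FibAlg.ev_val
  refine ⟨⟨FibAlg n⟩, FibAlg.ev, ?_, rfl, ?_, ?_, fun k hk1 hk3 => ⟨?_, ?_⟩, fun i hi1 hi2 => ?_,
    fun p q hp1 hp2 hq1 hq2 hpq hqp hpq' => ?_, FibAlg.locallyComplex, FibAlg.algLen_eq hn⟩
  · exact (Module.finrank_eq_card_basis FibAlg.basis).trans (Fintype.card_fin n)
  · exact hbasis ▸ FibAlg.basis.linearIndependent
  · exact hbasis ▸ FibAlg.basis.span_eq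
  · rw [FibAlg.ev_mul_ev hk1 (by omega) (by omega) (by omega), if_neg (by omega), if_pos rfl]
  · rw [FibAlg.ev_mul_ev (by omega) hk1 (by omega) (by omega), if_neg (by omega),
      if_neg (by omega), if_pos rfl]
  · exact (FibAlg.ev_mul_ev (n := n) hi1 hi1 (by omega) (by omega)).trans (if_pos rfl)
  · refine (FibAlg.ev_mul_ev (n := n) hp1 hq1 (by omega) (by omega)).trans ?_
    rw [if_neg hpq]
    split_ifs
    · exact FibAlg.ev_of_le (by omega)
    · rw [FibAlg.ev_of_le (by omega), neg_zero]
    · rfl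
end
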